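/- For every loopless digraph D, ⌈χ⃗*(D)⌉ = χ⃗(D); equivalently, χ⃗(D) − 1 < χ⃗*(D) ≤ χ⃗(D), where χ⃗(D) is the dichromatic number of D. -/

import Mathlib

open Finset

variable {V : Type*}

/-- `v :: l` forms a directed cycle of the digraph with arc relation `E`:
the vertices are pairwise distinct and each one has an arc to the next, cyclically. -/
def IsDicycle (E : V → V → Prop) (v : V) (l : List V) : Prop :=
  (v :: l).Nodup ∧ List.Chain E v (l ++ [v])

/-- The vertex set `A` induces an acyclic subdigraph of the digraph `E`:
no directed cycle of `E` has all of its vertices in `A`. -/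
def AcyclicOn (E : V → V → Prop) (A : Set V) : Prop :=
  ∀ v l, IsDicycle E v l → ¬ (∀ x ∈ v :: l, x ∈ A)

/-- The open arc of length 1 in `ℝ/pℤ` starting at (the image of) `a`. -/
def unitArc (p a : ℝ) : Set (AddCircle p) :=
  (fun x : ℝ => (x : AddCircle p)) '' Set.Ioo a (a + 1)

/-- An acyclic `p`-colouring of the digraph `E` : the preimage of every open arc
of length 1 induces an acyclic subdigraph. -/
def IsAcyclicColouring (E : V → V → Prop) (p : ℝ) (c : V → AddCircle p) : Prop :=
  ∀ a : ℝ, AcyclicOn E (c ⁻¹' unitArc p a)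

/-- The star dichromatic number of a digraph. -/
noncomputable def starDichromatic (E : V → V → Prop) : ℝ :=
  sInf {p : ℝ | 1 ≤ p ∧ ∃ c : V → AddCircle p, IsAcyclicColouring E p c}

/-- A weak circular `p`-colouring in the sense of Bokal et al. -/
def IsWeakCircularColouring (E : V → V → Prop) (p : ℝ) (c : V → AddCircle p) : Prop :=
  (∀ u w, E u w → c u = c w ∨
    ∃ r : ℝ, r ∈ Set.Ico (0 : ℝ) p ∧ (r : AddCircle p) = c w - c u ∧ 1 ≤ r) ∧
  ∀ t : AddCircle p, AcyclicOn E (c ⁻¹' {t})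

/-- The circular dichromatic number of a digraph. -/
noncomputable def circularDichromatic (E : V → V → Prop) : ℝ :=
  sInf {p : ℝ | 1 ≤ p ∧ ∃ c : V → AddCircle p, IsWeakCircularColouring E p c}

/-- The fractional dichromatic number: the optimal value of the covering linear
program over the acyclic vertex subsets. -/
noncomputable def fracDichromatic [Fintype V] [DecidableEq V] (E : V → V → Prop) : ℝ :=
  sInf {r : ℝ | ∃ x : Finset V → ℝ, (∀ A, 0 ≤ x A) ∧
    (∀ A : Finset V, x A ≠ 0 → AcyclicOn E ↑A) ∧
    (∀ v : V, 1 ≤ ∑ A ∈ Finset.univ.filter (fun A : Finset V => v ∈ A), x A) ∧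
    r = ∑ A : Finset V, x A}

/-- The cyclic interval `{i, i+1, ..., i+d-1}` in `ℤ/kℤ`. -/
def cycInterval (k : ℕ) (i : ZMod k) (d : ℕ) : Set (ZMod k) :=
  {j : ZMod k | ∃ t : ℕ, t < d ∧ j = i + (t : ZMod k)}

/-- An acyclic `(k,d)`-colouring of the digraph `E`. -/
def IsAcyclicKDColouring (E : V → V → Prop) (k d : ℕ) (c : V → ZMod k) : Prop :=
  ∀ i : ZMod k, AcyclicOn E (c ⁻¹' cycInterval k i d)

/-- The dichromatic number: the least `k` such that the vertex set can be partitioned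
into `k` classes each inducing an acyclic subdigraph. -/
noncomputable def dichromatic (E : V → V → Prop) : ℕ :=
  sInf {k : ℕ | ∃ c : V → Fin k, ∀ i : Fin k, AcyclicOn E (c ⁻¹' {i})}

/-- `v :: l` forms a cycle of the simple graph `G` (of length at least 3). -/
def IsGraphCycle (G : SimpleGraph V) (v : V) (l : List V) : Prop :=
  3 ≤ (v :: l).length ∧ (v :: l).Nodup ∧ List.Chain G.Adj v (l ++ [v])

/-- The vertex set `A` induces a forest (acyclic subgraph) in the simple graph `G`. -/
def ForestOn (G : SimpleGraph V) (A : Set V) : Prop :=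
  ∀ v l, IsGraphCycle G v l → ¬ (∀ x ∈ v :: l, x ∈ A)

/-- A `(k,d)`-tree-colouring of a graph. -/
def IsTreeColouring (G : SimpleGraph V) (k d : ℕ) (c : V → ZMod k) : Prop :=
  ∀ i : ZMod k, ForestOn G (c ⁻¹' cycInterval k i d)

/-- The circular vertex arboricity of a graph. -/
noncomputable def circularVertexArboricity (G : SimpleGraph V) : ℝ :=
  sInf {r : ℝ | ∃ k d : ℕ, 1 ≤ d ∧ d ≤ k ∧
    (∃ c : V → ZMod k, IsTreeColouring G k d c) ∧ r = (k : ℝ) / d}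

/-- `E` is an orientation of the simple graph `G`: for each edge exactly one of the
two possible arcs is present, and there are no other arcs. -/
def IsOrientation (G : SimpleGraph V) (E : V → V → Prop) : Prop :=
  ∀ u w, ((E u w ∨ E w u) ↔ G.Adj u w) ∧ ¬ (E u w ∧ E w u)

/-- The star dichromatic number of a graph: the maximum over all orientations. -/
noncomputable def starDichromaticGraph (G : SimpleGraph V) : ℝ :=
  sSup {r : ℝ | ∃ E : V → V → Prop, IsOrientation G E ∧ r = starDichromatic E}

/-- The fractional dichromatic number of a graph: the maximum over all orientations. -/
noncomputable def fracDichromaticGraph [Fintype V] [DecidableEq V] (G : SimpleGraph V) : ℝ :=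
  sSup {r : ℝ | ∃ E : V → V → Prop, IsOrientation G E ∧ r = fracDichromatic E}

/-- The fractional chromatic number of a graph: the optimal value of the covering
linear program over the independent vertex subsets. -/
noncomputable def fractionalChromatic [Fintype V] [DecidableEq V] (G : SimpleGraph V) : ℝ :=
  sInf {r : ℝ | ∃ x : Finset V → ℝ, (∀ A, 0 ≤ x A) ∧
    (∀ A : Finset V, x A ≠ 0 → ∀ u ∈ A, ∀ w ∈ A, ¬ G.Adj u w) ∧
    (∀ v : V, 1 ≤ ∑ A ∈ Finset.univ.filter (fun A : Finset V => v ∈ A), x A) ∧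
    r = ∑ A : Finset V, x A}

/-- A `(k,d)`-colouring of a graph in the sense of Vince: colours of adjacent vertices
have circular `k`-distance at least `d`. -/
def IsVinceColouring (G : SimpleGraph V) (k d : ℕ) (c : V → ZMod k) : Prop :=
  ∀ u w, G.Adj u w → d ≤ (c u - c w).val ∧ d ≤ (c w - c u).val

/-- Vince's star (circular) chromatic number of a graph. -/
noncomputable def starChromatic (G : SimpleGraph V) : ℝ :=
  sInf {r : ℝ | ∃ k d : ℕ, 1 ≤ d ∧ d ≤ k ∧
    (∃ c : V → ZMod k, IsVinceColouring G k d c) ∧ r = (k : ℝ) / d}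

/-- The circulant digraph `C⃗(k,d)` on `ℤ/kℤ`: each vertex `i` has the outgoing arcs
`(i, i+d), (i, i+d+1), …, (i, i+k-1)`. -/
def circulantDigraph (k d : ℕ) : ZMod k → ZMod k → Prop :=
  fun i j => ∃ t : ℕ, d ≤ t ∧ t < k ∧ j = i + (t : ZMod k)

/-- The directed cycle `C⃗_n` on `ℤ/nℤ`. -/
def dirCycle (n : ℕ) : ZMod n → ZMod n → Prop :=
  fun i j => j = i + 1

/-- The digraph `D^s` obtained from `D` by adding a dominating source `none`. -/
def addSource (E : V → V → Prop) : Option V → Option V → Prop :=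
  fun a b => match a, b with
  | none, some _ => True
  | some u, some w => E u w
  | _, none => False

/-- The wheel graph `W_k`: a cycle on `ℤ/kℤ` together with a hub `none` adjacent to
every cycle vertex. -/
def wheelGraph (k : ℕ) : SimpleGraph (Option (ZMod k)) :=
  SimpleGraph.fromRel (fun a b => match a, b with
    | none, some _ => True
    | some i, some j => j = i + 1
    | _, none => False)

/-! Placing the `k` classes of an acyclic partition at the points `0, 1, …, k - 1` of
`ℝ/kℤ` gives an acyclic `k`-colouring, because an open unit arc contains at most one of these
points; hence `χ⃗* ≤ χ⃗`. Conversely, lift an acyclic `p`-colouring to `[0, p)` and cut at the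
integers: this gives `⌈p⌉` classes, each inside a half-open unit interval and hence inside an
open unit arc, so `χ⃗ ≤ ⌈p⌉`. It remains to apply this at `p = χ⃗*`, i.e. to see that the
infimum is attained: the acyclic colourings, viewed as pairs `(p, ρ)` of a period and real
lifts, form a closed set, and a colouring of minimal period exists by compactness. -/

lemma acyclicOn_of_subsingleton {E : V → V → Prop} (hE : ∀ v, ¬ E v v) {A : Set V}
    (hA : A.Subsingleton) : AcyclicOn E A := by
  rintro v (_ | ⟨w, l⟩) ⟨hnd, hch⟩ hall
  · cases hch with
    | cons_cons h _ => exact hE v h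
  · have hvw : v = w := hA (hall v (by simp)) (hall w (by simp))
    exact (List.nodup_cons.1 hnd).1 (hvw ▸ List.mem_cons_self)

lemma exists_colouring_dichromatic [Finite V] {E : V → V → Prop} (hE : ∀ v, ¬ E v v) :
    ∃ c : V → Fin (dichromatic E), ∀ i, AcyclicOn E (c ⁻¹' {i}) :=
  Nat.sInf_mem (s := {k | ∃ c : V → Fin k, ∀ i, AcyclicOn E (c ⁻¹' {i})})
    ⟨Nat.card V, Finite.equivFin V, fun _ => acyclicOn_of_subsingleton hE
      fun _ hx _ hy => (Finite.equivFin V).injective (hx.trans hy.symm)⟩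

lemma mem_unitArc_iff {p a x : ℝ} :
    (x : AddCircle p) ∈ unitArc p a ↔ ∃ z : ℤ, x + z * p ∈ Set.Ioo a (a + 1) := by
  constructor
  · rintro ⟨t, ht, htx : (t : AddCircle p) = x⟩
    obtain ⟨z, hz⟩ := (AddCircle.coe_eq_zero_iff p).1
      (show ((t - x : ℝ) : AddCircle p) = 0 by rw [AddCircle.coe_sub, htx, sub_self])
    refine ⟨z, ?_⟩
    rw [zsmul_eq_mul] at hz
    rwa [hz, add_sub_cancel]
  · rintro ⟨z, hz⟩
    refine ⟨_, hz, show ((x + z * p : ℝ) : AddCircle p) = x from ?_⟩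
    rw [AddCircle.coe_add, (AddCircle.coe_eq_zero_iff p).2 ⟨z, zsmul_eq_mul _ _⟩, add_zero]

lemma exists_lift_mem_Ico {p : ℝ} (hp : 0 < p) (c : V → AddCircle p) :
    ∃ ρ : V → ℝ, (∀ v, ρ v ∈ Set.Ico 0 p) ∧ (fun v => (ρ v : AddCircle p)) = c := by
  have : Fact (0 < p) := ⟨hp⟩
  choose ρ hρ hρc using fun v => AddCircle.eq_coe_Ico (c v)
  exact ⟨ρ, hρ, funext hρc⟩

lemma exists_subset_Ioo_of_finite_subset_Ico {s : Set ℝ} (hs : s.Finite) {b : ℝ}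
    (hsb : s ⊆ Set.Ico b (b + 1)) : ∃ a, s ⊆ Set.Ioo a (a + 1) := by
  rcases s.eq_empty_or_nonempty with rfl | hne
  · exact ⟨b, Set.empty_subset _⟩
  have hmax : sSup s < b + 1 := (hsb (hne.csSup_mem hs)).2
  refine ⟨(sSup s - 1 + b) / 2, fun x hx => ⟨?_, ?_⟩⟩
  · linarith [(hsb hx).1]
  · linarith [le_csSup hs.bddAbove hx]

lemma dichromatic_le_ceil {E : V → V → Prop} {p : ℝ} (hp : 1 ≤ p) {c : V → AddCircle p}
    (hc : IsAcyclicColouring E p c) : dichromatic E ≤ ⌈p⌉₊ := by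
  obtain ⟨ρ, hρ, rfl⟩ := exists_lift_mem_Ico (by linarith) c
  have hlt : ∀ v, ⌊ρ v⌋₊ < ⌈p⌉₊ := fun v =>
    Nat.cast_lt.1 ((Nat.floor_le (hρ v).1).trans_lt ((hρ v).2.trans_le (Nat.le_ceil p)))
  refine Nat.sInf_le ⟨fun v => ⟨⌊ρ v⌋₊, hlt v⟩, fun i v l hcyc hall => ?_⟩
  have hIco : ρ '' {x | x ∈ v :: l} ⊆ Set.Ico (i : ℝ) (i + 1) := by
    rintro _ ⟨x, hx, rfl⟩
    exact (Nat.floor_eq_iff (hρ x).1).1 (congrArg Fin.val (hall x hx))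
  obtain ⟨a, ha⟩ :=
    exists_subset_Ioo_of_finite_subset_Ico (((v :: l).finite_toSet).image ρ) hIco
  exact hc a v l hcyc fun x hx => ⟨ρ x, ha ⟨x, hx, rfl⟩, rfl⟩

lemma Int.eq_of_cast_mem_Ioo {m n : ℤ} {a : ℝ} (hm : (m : ℝ) ∈ Set.Ioo a (a + 1))
    (hn : (n : ℝ) ∈ Set.Ioo a (a + 1)) : m = n := by
  have h₁ : ((m - n : ℤ) : ℝ) < 1 := by push_cast; linarith [hm.2, hn.1]
  have h₂ : ((n - m : ℤ) : ℝ) < 1 := by push_cast; linarith [hm.1, hn.2]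
  have h₁' : m - n < 1 := by exact_mod_cast h₁
  have h₂' : n - m < 1 := by exact_mod_cast h₂
  omega

lemma Fin.eq_of_coe_mem_unitArc {k : ℕ} {a : ℝ} {i j : Fin k}
    (hi : (((i : ℕ) : ℝ) : AddCircle (k : ℝ)) ∈ unitArc k a)
    (hj : (((j : ℕ) : ℝ) : AddCircle (k : ℝ)) ∈ unitArc k a) : i = j := by
  obtain ⟨z, hz⟩ := mem_unitArc_iff.1 hi
  obtain ⟨w, hw⟩ := mem_unitArc_iff.1 hj
  have hzw : (i + z * k : ℤ) = j + w * k :=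
    Int.eq_of_cast_mem_Ioo (by push_cast; exact hz) (by push_cast; exact hw)
  have hmod : ((i : ℕ) : ℤ) = (j : ℕ) := by
    have := congrArg (· % (k : ℤ)) hzw
    simp only [Int.add_mul_emod_self_right] at this
    rwa [Int.emod_eq_of_lt (by positivity) (by exact_mod_cast i.isLt),
      Int.emod_eq_of_lt (by positivity) (by exact_mod_cast j.isLt)] at this
  exact Fin.ext (by exact_mod_cast hmod)

lemma isAcyclicColouring_natCast {E : V → V → Prop} {k : ℕ} {c : V → Fin k}
    (hc : ∀ i, AcyclicOn E (c ⁻¹' {i})) :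
    IsAcyclicColouring E k fun v => (((c v : ℕ) : ℝ) : AddCircle (k : ℝ)) :=
  fun _ v l hcyc hall => hc (c v) v l hcyc fun x hx =>
    Fin.eq_of_coe_mem_unitArc (hall x hx) (hall v List.mem_cons_self)

open Filter Topology in
lemma isClosed_setOf_isAcyclicColouring (E : V → V → Prop) :
    IsClosed {q : ℝ × (V → ℝ) | IsAcyclicColouring E q.1 fun v => (q.2 v : AddCircle q.1)} := by
  refine isOpen_compl_iff.1 (isOpen_iff_eventually.2 fun q hq => ?_)
  simp only [Set.mem_compl_iff, Set.mem_ofPred_eq, IsAcyclicColouring, AcyclicOn] at hq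
  push Not at hq
  obtain ⟨a, v, l, hcyc, hall⟩ := hq
  choose! z hz using fun x hx => mem_unitArc_iff.1 (hall x hx)
  have hnear : ∀ᶠ q' in 𝓝 q, ∀ x ∈ {x | x ∈ v :: l},
      q'.2 x + (z x : ℝ) * q'.1 ∈ Set.Ioo a (a + 1) :=
    (v :: l).finite_toSet.eventually_all.2 fun x hx =>
      ContinuousAt.eventually_mem (by fun_prop) (isOpen_Ioo.mem_nhds (hz x hx))
  exact hnear.mono fun q' h hc => hc a v l hcyc fun x hx => mem_unitArc_iff.2 ⟨z x, h x hx⟩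

lemma isAcyclicColouring_starDichromatic {E : V → V → Prop} {p₁ : ℝ} (hp₁ : 1 ≤ p₁)
    {c₁ : V → AddCircle p₁} (hc₁ : IsAcyclicColouring E p₁ c₁) :
    1 ≤ starDichromatic E ∧ ∃ c, IsAcyclicColouring E (starDichromatic E) c := by
  set K := (Set.Icc 1 p₁ ×ˢ Set.univ.pi fun _ : V => Set.Icc 0 p₁) ∩
    {q : ℝ × (V → ℝ) | IsAcyclicColouring E q.1 fun v => (q.2 v : AddCircle q.1)}
  have hK : IsCompact K :=
    (isCompact_Icc.prod (isCompact_univ_pi fun _ => isCompact_Icc)).inter_right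
      (isClosed_setOf_isAcyclicColouring E)
  have hmemK : ∀ p, 1 ≤ p → p ≤ p₁ → ∀ c, IsAcyclicColouring E p c → ∃ ρ, (p, ρ) ∈ K := by
    intro p hp hpp₁ c hc
    obtain ⟨ρ, hρ, rfl⟩ := exists_lift_mem_Ico (by linarith) c
    exact ⟨ρ, ⟨⟨hp, hpp₁⟩, fun v _ => ⟨(hρ v).1, (hρ v).2.le.trans hpp₁⟩⟩, hc⟩
  obtain ⟨ρ₁, hρ₁⟩ := hmemK p₁ hp₁ le_rfl c₁ hc₁
  obtain ⟨q₀, ⟨⟨⟨hq₀1, hq₀p₁⟩, -⟩, hq₀⟩, hmin⟩ :=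
    hK.exists_isMinOn ⟨_, hρ₁⟩ continuous_fst.continuousOn
  have hstar : starDichromatic E = q₀.1 := by
    refine le_antisymm (csInf_le ⟨1, fun p hp => hp.1⟩ ⟨hq₀1, _, hq₀⟩)
      (le_csInf ⟨p₁, hp₁, c₁, hc₁⟩ fun p ⟨hp, c, hc⟩ => ?_)
    rcases le_or_gt p p₁ with hpp₁ | hp₁p
    · obtain ⟨ρ, hρ⟩ := hmemK p hp hpp₁ c hc
      exact hmin hρ
    · exact hq₀p₁.trans hp₁p.le
  rw [hstar]
  exact ⟨hq₀1, _, hq₀⟩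

/-- `⌈χ⃗*(D)⌉ = χ⃗(D)`; equivalently `χ⃗(D) - 1 < χ⃗*(D) ≤ χ⃗(D)`. -/
theorem stmt4 {V : Type*} [Fintype V] [Nonempty V] (E : V → V → Prop)
    (hE : ∀ v, ¬ E v v) :
    ⌈starDichromatic E⌉₊ = dichromatic E ∧
    (dichromatic E : ℝ) - 1 < starDichromatic E ∧
    starDichromatic E ≤ (dichromatic E : ℝ) := by
  obtain ⟨c, hc⟩ := exists_colouring_dichromatic hE
  have hk : (1 : ℝ) ≤ dichromatic E := by exact_mod_cast (c (Classical.arbitrary V)).pos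
  have hle : starDichromatic E ≤ dichromatic E :=
    csInf_le ⟨1, fun p hp => hp.1⟩ ⟨hk, _, isAcyclicColouring_natCast hc⟩
  obtain ⟨hstar, c₀, hc₀⟩ :=
    isAcyclicColouring_starDichromatic hk (isAcyclicColouring_natCast hc)
  have hceil : ⌈starDichromatic E⌉₊ = dichromatic E :=
    le_antisymm (Nat.ceil_le.2 hle) (dichromatic_le_ceil hstar hc₀)
  have hlt := Nat.ceil_lt_add_one (zero_le_one.trans hstar)
  rw [hceil] at hlt
  exact ⟨hceil, by linarith, hle⟩
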